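/- Let G be a countable group acting on a countable set X. If X has subexponential growth of orbits, then for every finite subset S ⊆ G and every δ > 0 there exists a moderate ℓ¹-function ν on X such that |ν(sx)/ν(x) − 1| < δ for every s ∈ S and every x ∈ X. -/

import Mathlib

/-
Exhaust `X` by finite sets `B₀ ⊆ B₁ ⊆ ⋯` such that `t • Bₙ ⊆ Bₙ₊₁` for `t ∈ S ∪ S⁻¹` and, for each
`g ∈ G`, `g • Bₙ ⊆ Bₙ₊₁` for all large `n`: if `Eⱼ` and `Aⱼ` are increasing finite exhaustions of
`X` and `G`, take for `Bₙ` the union of the balls of radius `n` around the points of `E (φ n)`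
for the alphabet `S ∪ S⁻¹ ∪ A (φ n)`. Subexponential growth of orbits lets `φ` tend to infinity
so slowly that `|Bₙ| ≤ exp (n ε(n))` with `ε` decreasing to `0`.

If `ℓ x` is the first `n` with `x ∈ Bₙ`, then `ℓ (g • x)` and `ℓ x` differ by at most one for
`g ∈ S`, and for any `g` outside a finite set of `x`. So `ν = exp (-D ∘ ℓ)` is a solution as
soon as the increments of `D` tend to `0`, are small everywhere, and `∑ |Bₙ| exp (-D n) < ∞`;
a shift of `D n = ∑_{k<n} ε(k) + 2 log (n + 1)` does it.
-/

open Filter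

/-- The set of points reachable from `x` by products of at most `n` elements of `S`. -/
def orbitSet {G X : Type*} [Group G] [MulAction G X] (S : Finset G) (x : X) (n : ℕ) : Set X :=
  {y | ∃ l : List G, l.length ≤ n ∧ (∀ g ∈ l, g ∈ S) ∧ l.prod • x = y}

open Set Real Topology Pointwise

section OrbitSet

variable {G X : Type*} [Group G] [MulAction G X]

lemma mem_orbitSet_self (F : Finset G) (x : X) (n : ℕ) : x ∈ orbitSet F x n :=
  ⟨[], by simp⟩

lemma orbitSet_mono {F F' : Finset G} (hF : F ⊆ F') {m n : ℕ} (hmn : m ≤ n) (x : X) :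
    orbitSet F x m ⊆ orbitSet F' x n := by
  rintro y ⟨l, hl, hlF, rfl⟩
  exact ⟨l, hl.trans hmn, fun g hg => hF (hlF g hg), rfl⟩

lemma smul_mem_orbitSet_succ {F : Finset G} {g : G} (hg : g ∈ F) {x y : X} {n : ℕ}
    (hy : y ∈ orbitSet F x n) : g • y ∈ orbitSet F x (n + 1) := by
  obtain ⟨l, hl, hlF, rfl⟩ := hy
  refine ⟨g :: l, by simpa using hl, ?_, by rw [List.prod_cons, mul_smul]⟩
  simpa [List.mem_cons] using ⟨hg, hlF⟩

lemma orbitSet_finite (F : Finset G) (x : X) (n : ℕ) : (orbitSet F x n).Finite := by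
  have hwords : {l : List G | l.length ≤ n ∧ ∀ g ∈ l, g ∈ F}.Finite := by
    refine ((List.finite_length_le F n).image (List.map Subtype.val)).subset ?_
    rintro l ⟨hl, hlF⟩
    exact ⟨l.attach.map fun g => ⟨g.1, hlF g.1 g.2⟩, by simpa using hl, by simp⟩
  refine (hwords.image fun l => l.prod • x).subset ?_
  rintro _ ⟨l, hl, hlF, rfl⟩
  exact ⟨l, ⟨hl, hlF⟩, rfl⟩

end OrbitSet

def IsSubexponential (u : ℕ → ℝ) : Prop :=
  ∀ ε > 0, ∀ᶠ n in atTop, u n ≤ exp (ε * n)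

namespace IsSubexponential

lemma of_tendsto_rpow {u : ℕ → ℝ} (hu : ∀ n, 0 ≤ u n)
    (h : Tendsto (fun n : ℕ => u n ^ (1 / (n : ℝ))) atTop (𝓝 1)) : IsSubexponential u := by
  intro ε hε
  filter_upwards [h.eventually_lt_const (one_lt_exp_iff.2 hε), eventually_ge_atTop 1] with n hn hn1
  calc u n = (u n ^ (1 / (n : ℝ))) ^ n := by
        rw [one_div, rpow_inv_natCast_pow (hu n) (by omega)]
    _ ≤ exp ε ^ n := by gcongr; exact rpow_nonneg (hu n) _
    _ = exp (ε * n) := by rw [← exp_nat_mul, mul_comm]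

lemma add {u v : ℕ → ℝ} (hu : IsSubexponential u) (hv : IsSubexponential v) :
    IsSubexponential (u + v) := by
  intro ε hε
  have hlarge : ∀ᶠ n : ℕ in atTop, 2 ≤ exp (ε / 2 * n) :=
    (tendsto_exp_atTop.comp (tendsto_natCast_atTop_atTop.const_mul_atTop (half_pos hε))
      |>.eventually_ge_atTop 2)
  filter_upwards [hu _ (half_pos hε), hv _ (half_pos hε), hlarge] with n hun hvn hn
  calc u n + v n ≤ 2 * exp (ε / 2 * n) := by linarith
    _ ≤ exp (ε / 2 * n) * exp (ε / 2 * n) := by gcongr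
    _ = exp (ε * n) := by rw [← exp_add]; ring_nf

lemma sum {ι : Type*} {s : Finset ι} {u : ι → ℕ → ℝ} (h : ∀ i ∈ s, IsSubexponential (u i)) :
    IsSubexponential fun n => ∑ i ∈ s, u i n := by
  classical
  induction s using Finset.induction_on with
  | empty => exact fun ε _ => Eventually.of_forall fun n => by simpa using (exp_pos _).le
  | insert i s hi ih =>
    simp only [Finset.sum_insert hi]
    exact (h i (s.mem_insert_self i)).add (ih fun j hj => h j (Finset.mem_insert_of_mem hj))

end IsSubexponential

lemma exists_monotone_tendsto_eventually {P : ℕ → ℕ → Prop} (h : ∀ j, ∀ᶠ n in atTop, P j n) :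
    ∃ φ : ℕ → ℕ, Monotone φ ∧ Tendsto φ atTop atTop ∧ ∀ᶠ n in atTop, P (φ n) n := by
  classical
  choose N hN using fun j => eventually_atTop.1 (h j)
  refine ⟨fun n => Nat.findGreatest (fun j => max j (N j) ≤ n) n,
    fun a b hab => Nat.findGreatest_mono (fun j hj => hj.trans hab) hab,
    tendsto_atTop_atTop.2 fun j => ⟨max j (N j), fun n hn =>
      Nat.le_findGreatest ((le_max_left _ _).trans hn) hn⟩,
    eventually_atTop.2 ⟨N 0, fun n hn => hN _ _ ?_⟩⟩
  exact (le_max_right _ _).trans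
    (Nat.findGreatest_spec (P := fun j => max j (N j) ≤ n) n.zero_le (by simpa using hn))

structure IsAdaptedExhaustion {G X : Type*} [Group G] [MulAction G X] (T : Finset G)
    (B : ℕ → Set X) : Prop where
  mono : Monotone B
  exhaustive : ∀ x, ∃ n, x ∈ B n
  finite : ∀ n, (B n).Finite
  mapsTo : ∀ t ∈ T, ∀ n, MapsTo (t • ·) (B n) (B (n + 1))
  eventually_mapsTo : ∀ g : G, ∀ᶠ n in atTop, MapsTo (g • ·) (B n) (B (n + 1))

section Exhaustion

variable {G X : Type*} [Group G] [MulAction G X]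

lemma isAdaptedExhaustion_biUnion_orbitSet {T : Finset G} {E : ℕ → Finset X}
    {F : ℕ → Finset G} (hEm : Monotone E) (hE : Tendsto E atTop atTop) (hFm : Monotone F)
    (hF : Tendsto F atTop atTop) (hT : ∀ n, T ⊆ F n) :
    IsAdaptedExhaustion T fun n => ⋃ x ∈ E n, orbitSet (F n) x n := by
  have hstep : ∀ {g n}, g ∈ F n → MapsTo (g • ·) (⋃ x ∈ E n, orbitSet (F n) x n)
      (⋃ x ∈ E (n + 1), orbitSet (F (n + 1)) x (n + 1)) := by
    intro g n hg y hy
    obtain ⟨x, hx, hy⟩ := mem_iUnion₂.1 hy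
    exact mem_biUnion (hEm n.le_succ hx)
      (orbitSet_mono (hFm n.le_succ) le_rfl x (smul_mem_orbitSet_succ hg hy))
  refine ⟨fun m n hmn => biUnion_mono (hEm hmn) fun x _ => orbitSet_mono (hFm hmn) hmn x,
    fun x => ?_, fun n => ?_, fun t ht n => hstep (hT n ht),
    fun g => (tendsto_atTop.1 hF {g}).mono fun n hn => hstep (hn (Finset.mem_singleton_self g))⟩
  · obtain ⟨n, hn⟩ := (tendsto_atTop.1 hE {x}).exists
    exact ⟨n, mem_biUnion (hn (Finset.mem_singleton_self x)) (mem_orbitSet_self _ _ _)⟩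
  · exact (E n).finite_toSet.biUnion fun x _ => orbitSet_finite _ _ _

theorem exists_isAdaptedExhaustion [Countable G] [Countable X]
    (hsub : ∀ (F : Finset G) (x : X), IsSubexponential fun n => ((orbitSet F x n).ncard : ℝ))
    (T : Finset G) :
    ∃ (B : ℕ → Set X) (ε : ℕ → ℝ), IsAdaptedExhaustion T B ∧ Antitone ε ∧
      Tendsto ε atTop (𝓝 0) ∧ ∀ᶠ n in atTop, ((B n).ncard : ℝ) ≤ exp (n * ε n) := by
  classical
  obtain ⟨E, hEm, hE⟩ := exists_seq_monotone_tendsto_atTop_atTop (Finset X)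
  obtain ⟨A, hAm, hA⟩ := exists_seq_monotone_tendsto_atTop_atTop (Finset G)
  set F : ℕ → Finset G := fun j => T ∪ A j
  have hFm : Monotone F := fun i j hij => Finset.union_subset_union le_rfl (hAm hij)
  have hF : Tendsto F atTop atTop := tendsto_atTop_mono (fun j => Finset.subset_union_right) hA
  have hballs : ∀ j : ℕ, ∀ᶠ n in atTop,
      ∑ x ∈ E j, ((orbitSet (F j) x n).ncard : ℝ) ≤ exp ((j + 1 : ℝ)⁻¹ * n) :=
    fun j => IsSubexponential.sum (fun x _ => hsub _ x) _ (by positivity)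
  obtain ⟨φ, hφm, hφ, hφballs⟩ := exists_monotone_tendsto_eventually hballs
  refine ⟨_, fun n => (φ n + 1 : ℝ)⁻¹, isAdaptedExhaustion_biUnion_orbitSet (hEm.comp hφm)
    (hE.comp hφ) (hFm.comp hφm) (hF.comp hφ) fun n => Finset.subset_union_left,
    fun m n hmn => ?_, ?_, ?_⟩
  · exact inv_anti₀ (by positivity) (by gcongr; exact hφm hmn)
  · exact tendsto_inv_atTop_zero.comp
      (tendsto_atTop_add_const_right _ 1 (tendsto_natCast_atTop_atTop.comp hφ))
  · filter_upwards [hφballs] with n hn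
    calc (((⋃ x ∈ E (φ n), orbitSet (F (φ n)) x n).ncard : ℕ) : ℝ)
        ≤ ∑ x ∈ E (φ n), ((orbitSet (F (φ n)) x n).ncard : ℝ) := by
          exact_mod_cast Finset.set_ncard_biUnion_le _ _
      _ ≤ exp (n * (φ n + 1 : ℝ)⁻¹) := by rwa [mul_comm]

end Exhaustion

lemma abs_sub_le_abs_sub_min_succ (D : ℕ → ℝ) {m m' : ℕ} (h₁ : m' ≤ m + 1) (h₂ : m ≤ m' + 1) :
    |D m - D m'| ≤ |D (min m m' + 1) - D (min m m')| := by
  obtain rfl | rfl | rfl : m' = m + 1 ∨ m' = m ∨ m = m' + 1 := by omega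
  all_goals simp [abs_sub_comm]

namespace IsAdaptedExhaustion

variable {G X : Type*} [Group G] [MulAction G X] {T : Finset G} {B : ℕ → Set X}
  (hB : IsAdaptedExhaustion T B)

open Classical in
noncomputable def level (x : X) : ℕ :=
  Nat.find (hB.exhaustive x)

lemma mem_level (x : X) : x ∈ B (hB.level x) := by
  classical exact Nat.find_spec (hB.exhaustive x)

lemma level_le {x : X} {n : ℕ} (h : x ∈ B n) : hB.level x ≤ n := by
  classical exact Nat.find_min' (hB.exhaustive x) h

lemma level_le_succ_of_mapsTo {f : X → X} {x : X}
    (hf : MapsTo f (B (hB.level x)) (B (hB.level x + 1))) : hB.level (f x) ≤ hB.level x + 1 :=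
  hB.level_le (hf (hB.mem_level x))

lemma level_smul_le_succ {t : G} (ht : t ∈ T) (x : X) : hB.level (t • x) ≤ hB.level x + 1 :=
  hB.level_le_succ_of_mapsTo (hB.mapsTo t ht _)

lemma tendsto_level : Tendsto hB.level cofinite atTop := by
  refine tendsto_atTop.2 fun N => eventually_cofinite.2 <| (hB.finite N).subset fun x hx => ?_
  exact hB.mono (not_le.1 hx).le (hB.mem_level x)

lemma eventually_level_smul_le_succ (g : G) :
    ∀ᶠ x in cofinite, hB.level (g • x) ≤ hB.level x + 1 :=
  (hB.tendsto_level.eventually (hB.eventually_mapsTo g)).mono fun _ hx =>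
    hB.level_le_succ_of_mapsTo hx

lemma summable_comp_level {w : ℕ → ℝ} (hw : ∀ n, 0 ≤ w n)
    (hsum : Summable fun n => (B n).ncard * w n) : Summable fun x => w (hB.level x) := by
  have hfiber : ∀ n, {x | hB.level x = n} ⊆ B n := fun n x hx => hx ▸ hB.mem_level x
  rw [← (Equiv.sigmaFiberEquiv hB.level).summable_iff]
  refine (summable_sigma_of_nonneg fun _ => hw _).2 ⟨fun n => ?_, ?_⟩
  · have : Finite {x // hB.level x = n} := ((hB.finite n).subset (hfiber n)).to_subtype
    exact Summable.of_finite
  refine hsum.of_nonneg_of_le (fun n => tsum_nonneg fun _ => hw _) fun n => ?_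
  have hcard : Nat.card {x // hB.level x = n} ≤ (B n).ncard :=
    Set.ncard_le_ncard (hfiber n) (hB.finite n)
  calc ∑' y : {x // hB.level x = n}, w (hB.level y) = Nat.card {x // hB.level x = n} * w n := by
        rw [tsum_congr fun y => congrArg w y.2, tsum_const, nsmul_eq_mul]
    _ ≤ (B n).ncard * w n := by gcongr; exact hw n

lemma abs_sub_comp_level_smul_le {D : ℕ → ℝ} {η : ℝ} (hD : ∀ n, |D (n + 1) - D n| ≤ η) {t : G}
    (ht : t ∈ T) (ht' : t⁻¹ ∈ T) (x : X) : |D (hB.level x) - D (hB.level (t • x))| ≤ η := by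
  refine (abs_sub_le_abs_sub_min_succ D (hB.level_smul_le_succ ht x) ?_).trans (hD _)
  simpa using hB.level_smul_le_succ ht' (t • x)

lemma tendsto_exp_neg_comp_level_smul_div {D : ℕ → ℝ}
    (hD : Tendsto (fun n => D (n + 1) - D n) atTop (𝓝 0)) (g : G) :
    Tendsto (fun x => exp (-D (hB.level (g • x))) / exp (-D (hB.level x))) cofinite (𝓝 1) := by
  have hlevel_smul : Tendsto (fun x => hB.level (g • x)) cofinite atTop :=
    hB.tendsto_level.comp (MulAction.injective g).tendsto_cofinite
  have hlevel_inv_smul : ∀ᶠ x in cofinite, hB.level x ≤ hB.level (g • x) + 1 :=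
    (MulAction.injective g).tendsto_cofinite.eventually (hB.eventually_level_smul_le_succ g⁻¹)
      |>.mono fun x hx => by simpa using hx
  have hdiff : Tendsto (fun x => D (hB.level x) - D (hB.level (g • x))) cofinite (𝓝 0) := by
    refine squeeze_zero_norm' ?_ (by simpa using (hD.comp
      (tendsto_inf_atTop _ hB.tendsto_level hlevel_smul)).abs)
    filter_upwards [hB.eventually_level_smul_le_succ g, hlevel_inv_smul] with x h₁ h₂
    exact abs_sub_le_abs_sub_min_succ D h₁ h₂
  refine (exp_zero ▸ (continuous_exp.tendsto 0).comp hdiff).congr fun x => ?_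
  rw [Function.comp_apply, ← exp_sub, neg_sub_neg]

end IsAdaptedExhaustion

section Potential

variable {b ε : ℕ → ℝ}

lemma summable_mul_exp_neg_sum_add_two_log (hb : ∀ n, 0 ≤ b n) (hε : Antitone ε)
    (hbε : ∀ᶠ n in atTop, b n ≤ exp (n * ε n)) :
    Summable fun n : ℕ => b n * exp (-(∑ k ∈ Finset.range n, ε k + 2 * log (n + 1))) := by
  have hsq : Summable fun n : ℕ => (((n : ℝ) + 1) ^ 2)⁻¹ := by
    simpa using (summable_nat_add_iff 1).2 (Real.summable_nat_pow_inv.2 one_lt_two)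
  refine hsq.of_norm_bounded_eventually_nat ?_
  filter_upwards [hbε] with n hn
  have hsum : n * ε n ≤ ∑ k ∈ Finset.range n, ε k := by
    simpa using Finset.card_nsmul_le_sum (Finset.range n) ε (ε n)
      fun k hk => hε (Finset.mem_range.1 hk).le
  rw [Real.norm_of_nonneg (mul_nonneg (hb n) (exp_pos _).le)]
  calc b n * exp (-(∑ k ∈ Finset.range n, ε k + 2 * log (n + 1)))
      ≤ exp (n * ε n) * exp (-(∑ k ∈ Finset.range n, ε k + 2 * log (n + 1))) := by gcongr
    _ ≤ exp (-(2 * log (n + 1))) := by rw [← exp_add]; gcongr; linarith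
    _ = (((n : ℝ) + 1) ^ 2)⁻¹ := by
        rw [exp_neg, mul_comm, exp_mul, exp_log (by positivity), rpow_two]

theorem exists_summable_mul_exp_neg (hb : ∀ n, 0 ≤ b n) (hε : Antitone ε)
    (hε0 : Tendsto ε atTop (𝓝 0)) (hbε : ∀ᶠ n in atTop, b n ≤ exp (n * ε n)) {η : ℝ}
    (hη : 0 < η) :
    ∃ D : ℕ → ℝ, (∀ n, |D (n + 1) - D n| ≤ η) ∧
      Tendsto (fun n => D (n + 1) - D n) atTop (𝓝 0) ∧ Summable fun n => b n * exp (-D n) := by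
  set D₀ : ℕ → ℝ := fun n => ∑ k ∈ Finset.range n, ε k + 2 * log (n + 1)
  have hstep : ∀ n, D₀ (n + 1) - D₀ n = ε n + 2 * (log (n + 1 + 1) - log (n + 1)) := by
    intro n
    simp only [D₀, Finset.sum_range_succ, Nat.cast_succ]
    ring
  have hstep_nonneg : ∀ n, 0 ≤ D₀ (n + 1) - D₀ n := fun n => by
    rw [hstep]
    have := hε.le_of_tendsto hε0 n
    have : log (n + 1) ≤ log (n + 1 + 1) := log_le_log (by positivity) (by linarith)
    linarith
  have hstep0 : Tendsto (fun n => D₀ (n + 1) - D₀ n) atTop (𝓝 0) := by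
    simp only [hstep]
    simpa using hε0.add
      ((tendsto_log_nat_add_one_sub_log.comp (tendsto_add_atTop_nat 1)).const_mul 2)
  have hD₀ : Monotone D₀ := monotone_nat_of_le_succ fun n => by linarith [hstep_nonneg n]
  obtain ⟨K, hK⟩ := eventually_atTop.1 (hstep0.eventually_lt_const hη)
  refine ⟨fun n => D₀ (K + n), fun n => ?_, ?_, ?_⟩
  · exact (abs_of_nonneg (hstep_nonneg (K + n))).trans_le (hK (K + n) (Nat.le_add_right K n)).le
  · simpa only [Function.comp_def, add_comm _ K, ← add_assoc]
      using hstep0.comp (tendsto_add_atTop_nat K)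
  · refine (summable_mul_exp_neg_sum_add_two_log hb hε hbε).of_nonneg_of_le
      (fun n => mul_nonneg (hb n) (exp_pos _).le) fun n => ?_
    exact mul_le_mul_of_nonneg_left (exp_le_exp.2 (neg_le_neg (hD₀ (Nat.le_add_left n K)))) (hb n)

end Potential

theorem moderate_l1_close_to_invariant
    {G X : Type*} [Group G] [MulAction G X] [Countable G] [Countable X]
    (hsub : ∀ (S : Finset G) (x : X),
      Tendsto (fun n : ℕ => (Nat.card (orbitSet S x n) : ℝ) ^ (1 / (n : ℝ))) atTop (nhds 1))
    (S : Finset G) (δ : ℝ) (hδ : 0 < δ) :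
    ∃ ν : X → ℝ, Summable ν ∧ (∀ x, 0 < ν x) ∧
      (∀ g : G, Tendsto (fun x : X => ν (g • x) / ν x) cofinite (nhds 1)) ∧
      ∀ s ∈ S, ∀ x : X, |ν (s • x) / ν x - 1| < δ := by
  classical
  obtain ⟨η, hη, hexp⟩ : ∃ η > 0, ∀ t : ℝ, |t| < η → |exp t - 1| < δ := by
    simpa [Real.dist_eq] using Metric.continuousAt_iff.1 (continuous_exp.continuousAt (x := 0)) δ hδ
  obtain ⟨B, ε, hB, hε, hε0, hcard⟩ := exists_isAdaptedExhaustion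
    (fun F x => .of_tendsto_rpow (fun _ => Nat.cast_nonneg _) (hsub F x)) (S ∪ S⁻¹)
  obtain ⟨D, hDη, hD0, hDsum⟩ :=
    exists_summable_mul_exp_neg (fun _ => Nat.cast_nonneg _) hε hε0 hcard (half_pos hη)
  refine ⟨fun x => exp (-D (hB.level x)), hB.summable_comp_level (fun _ => (exp_pos _).le) hDsum,
    fun _ => exp_pos _, hB.tendsto_exp_neg_comp_level_smul_div hD0, fun s hs x => ?_⟩
  have hsx := hB.abs_sub_comp_level_smul_le hDη (Finset.mem_union_left _ hs)
    (Finset.mem_union_right _ (Finset.inv_mem_inv hs)) x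
  rw [← exp_sub, neg_sub_neg]
  exact hexp _ (hsx.trans_lt (half_lt_self hη))
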